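/- arXiv:2401.00378 — 4 statements merged into one kernel-verified Lean document; each statement's English description precedes it below -/
import Mathlib

section
/- The following are equivalent: (i) m¹ is an invariant measure for q; (ii) m¹ is an invariant measure for q̂; (iii) m² is an invariant measure for Q. -/
open MeasureTheory ProbabilityTheory Set Pointwise
open scoped ENNReal

noncomputable section

/-- The increasing affine map from `(-1,1)` onto the chord `E_u`. -/
def ellMap (γ u x : ℝ) : ℝ := -u * Real.cos γ + x * Real.sqrt (1 - u ^ 2 * Real.sin γ ^ 2)

/-- The inverse of `ellMap γ u`. -/
def ellInv (γ u y : ℝ) : ℝ := (y + u * Real.cos γ) / Real.sqrt (1 - u ^ 2 * Real.sin γ ^ 2)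

/-- The open elliptical region `E`. -/
def Eset (γ : ℝ) : Set (ℝ × ℝ) :=
  {p | p.1 ^ 2 + 2 * Real.cos γ * p.1 * p.2 + p.2 ^ 2 < 1}

/-- The state space `E* = E × {−1,1}`, realized inside `ℝ × ℝ × ℝ`. -/
def EstarSet (γ : ℝ) : Set (ℝ × ℝ × ℝ) :=
  {w | (w.1, w.2.1) ∈ Eset γ ∧ (w.2.2 = 1 ∨ w.2.2 = -1)}

/-- Uniform probability measure on `(-1,1)`. -/
def m1 : Measure ℝ := (2 : ℝ≥0∞)⁻¹ • volume.restrict (Ioo (-1 : ℝ) 1)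

/-- The probability measure `m²` on `E*`: normalized Lebesgue measure on `E` times
uniform measure on `{−1,1}`. -/
def m2 (γ : ℝ) : Measure (ℝ × ℝ × ℝ) :=
  ((((volume (Eset γ))⁻¹ • volume.restrict (Eset γ)).prod
      ((2 : ℝ≥0∞)⁻¹ • (Measure.dirac (1 : ℝ) + Measure.dirac (-1 : ℝ)))).map
    fun p => (p.1.1, p.1.2, p.2))

/-- `q` is a Markov kernel on `(-1,1)`. -/
def IsMarkovOnInterval (q : Kernel ℝ ℝ) : Prop :=
  IsMarkovKernel q ∧ ∀ x ∈ Ioo (-1 : ℝ) 1, q x (Ioo (-1 : ℝ) 1) = 1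

/-- The kernel `Q` of the alternating random walk, as a measure-valued function on the
state space. -/
def Qfun (γ : ℝ) (q : Kernel ℝ ℝ) : ℝ × ℝ × ℝ → Measure (ℝ × ℝ × ℝ) := fun w =>
  if w.2.2 = -1 then
    Measure.map (fun x => (ellMap γ w.2.1 x, w.2.1, (1 : ℝ))) (q (-ellInv γ w.2.1 w.1))
  else
    Measure.map (fun x => (w.1, ellMap γ w.1 x, (-1 : ℝ))) (q (-ellInv γ w.1 w.2.1))

/-- The kernel `Q†`. -/
def Qdag (γ : ℝ) (q : Kernel ℝ ℝ) : ℝ × ℝ × ℝ → Measure (ℝ × ℝ × ℝ) := fun w =>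
  if w.2.2 = 1 then
    Measure.map (fun x => (ellMap γ w.2.1 x, w.2.1, (-1 : ℝ)))
      ((q (ellInv γ w.2.1 w.1)).map (fun y => -y))
  else
    Measure.map (fun x => (w.1, ellMap γ w.1 x, (1 : ℝ)))
      ((q (ellInv γ w.1 w.2.1)).map (fun y => -y))

/-- Bounded continuous real-valued functions on a subset `S`. -/
def BddCtsOn {X : Type*} [TopologicalSpace X] (S : Set X) (f : X → ℝ) : Prop :=
  ContinuousOn f S ∧ ∃ C, ∀ x ∈ S, |f x| ≤ C

/-- `m¹` is a reversible measure for `q`. -/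
def Reversible1 (q : Kernel ℝ ℝ) : Prop :=
  ∀ j k : ℝ → ℝ, BddCtsOn (Ioo (-1 : ℝ) 1) j → BddCtsOn (Ioo (-1 : ℝ) 1) k →
    ∫ x, k x * ∫ y, j y ∂(q x) ∂m1 = ∫ x, j x * ∫ y, k y ∂(q x) ∂m1

/-- The `†`-operation on measure-valued functions on `(-1,1)`: `p†(x,A) := p(−x,−A)`. -/
def dag (p : ℝ → Measure ℝ) : ℝ → Measure ℝ := fun x => (p (-x)).map (fun y => -y)

/-- `m¹` is a `†`-reversible measure for `p`. -/
def DagReversible1 (p : ℝ → Measure ℝ) : Prop :=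
  ∀ j k : ℝ → ℝ, BddCtsOn (Ioo (-1 : ℝ) 1) j → BddCtsOn (Ioo (-1 : ℝ) 1) k →
    ∫ x, k x * ∫ y, j y ∂(p x) ∂m1 = ∫ x, j x * ∫ y, k y ∂(dag p x) ∂m1

/-- `m²` is a `†`-reversible measure for `Q`. -/
def DagReversible2 (γ : ℝ) (q : Kernel ℝ ℝ) : Prop :=
  ∀ f g : ℝ × ℝ × ℝ → ℝ, BddCtsOn (EstarSet γ) f → BddCtsOn (EstarSet γ) g →
    ∫ w, g w * ∫ w', f w' ∂(Qfun γ q w) ∂(m2 γ) =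
      ∫ w, f w * ∫ w', g w' ∂(Qdag γ q w) ∂(m2 γ)

/-- `μ` is an invariant measure for the transition function `p`. -/
def KInvariantMeasure {S : Type*} [MeasurableSpace S] (μ : Measure S) (p : S → Measure S) :
    Prop :=
  ∀ A : Set S, MeasurableSet A → ∫⁻ x, p x A ∂μ = μ A

/-- The set `A` is `(μ,p)`-invariant. -/
def KInvariantSet {S : Type*} [MeasurableSpace S] (μ : Measure S) (p : S → Measure S)
    (A : Set S) : Prop :=
  ∀ᵐ x ∂μ, x ∈ A → p x A = 1

/-- `μ` is an ergodic measure for the transition function `p`. -/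
def KErgodicMeasure {S : Type*} [MeasurableSpace S] (μ : Measure S) (p : S → Measure S) :
    Prop :=
  KInvariantMeasure μ p ∧
    ∀ A : Set S, MeasurableSet A → KInvariantSet μ p A → μ A = 0 ∨ μ A = 1

/-- The set `A` is `(μ,p)`-ergodic. -/
def KErgodicSet {S : Type*} [MeasurableSpace S] (μ : Measure S) (p : S → Measure S)
    (A : Set S) : Prop :=
  MeasurableSet A ∧ KInvariantSet μ p A ∧
    ∀ B : Set S, B ⊆ A → MeasurableSet B → KInvariantSet μ p B → μ B = 0 ∨ μ B = μ A

/-- `F⁺`: the slice of `F ⊆ E*` at `s = 1`. -/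
def Fplus (F : Set (ℝ × ℝ × ℝ)) : Set (ℝ × ℝ) := {p | (p.1, p.2, (1 : ℝ)) ∈ F}

/-- `F⁻`: the slice of `F ⊆ E*` at `s = −1`. -/
def Fminus (F : Set (ℝ × ℝ × ℝ)) : Set (ℝ × ℝ) := {p | (p.1, p.2, (-1 : ℝ)) ∈ F}

/-- `[G]^u ⊆ (−1,1)`. -/
def brU (γ : ℝ) (G : Set (ℝ × ℝ)) (u : ℝ) : Set ℝ :=
  {x | x ∈ Ioo (-1 : ℝ) 1 ∧ (u, ellMap γ u x) ∈ G}

/-- `[G]_v ⊆ (−1,1)`. -/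
def brV (γ : ℝ) (G : Set (ℝ × ℝ)) (v : ℝ) : Set ℝ :=
  {x | x ∈ Ioo (-1 : ℝ) 1 ∧ (ellMap γ v x, v) ∈ G}

/-- The map `T₀` on `E*`. -/
def T0 (γ : ℝ) (w : ℝ × ℝ × ℝ) : ℝ × ℝ × ℝ :=
  (-w.1 - 2 * w.2.1 * Real.cos γ, w.2.1, -w.2.2)

/-- The map `T₁` on `E*`. -/
def T1 (γ : ℝ) (w : ℝ × ℝ × ℝ) : ℝ × ℝ × ℝ :=
  (w.1, -w.2.1 - 2 * w.1 * Real.cos γ, -w.2.2)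

/-- The linear map `U_γ` taking `E` to the unit disk. -/
def Ugamma (γ : ℝ) (p : ℝ × ℝ) : ℝ × ℝ := (p.1 + p.2 * Real.cos γ, p.2 * Real.sin γ)

/-- `V(u,v,s) = s·|U_γ(u,v)|²`. -/
def Vfun (γ : ℝ) (w : ℝ × ℝ × ℝ) : ℝ :=
  w.2.2 * ((w.1 + w.2.1 * Real.cos γ) ^ 2 + (w.2.1 * Real.sin γ) ^ 2)

/-!
Negation preserves `m¹`, which gives (i) ⇔ (ii). Up to normalisation, `m²` is Lebesgue measure
on the two sheets `s = ±1` of `E*`, and `Q` jumps between the sheets along a chord of `E`,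
redistributing the chord coordinate `ℓ_u⁻¹ v` according to `q̂`. Disintegrating Lebesgue measure on
`E` along its vertical chords `{u} × ℓ_u '' (-1,1)`, whose lengths are `2√(1 - u² sin² γ)`, shows
that Lebesgue measure on `E` is invariant for one such chord step iff Lebesgue measure on `(-1,1)`
is invariant for `q̂`; the swap `(u,v) ↦ (v,u)` preserves `E` and turns horizontal chords into
vertical ones. Conversely, testing the invariance of `m²` on a set inside one sheet isolates a
single chord step.
-/

section KInvariant

variable {S : Type*} [MeasurableSpace S]

lemma kInvariantMeasure_smul_iff {μ : Measure S} {p : S → Measure S} {c : ℝ≥0∞}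
    (hc₀ : c ≠ 0) (hc : c ≠ ∞) : KInvariantMeasure (c • μ) p ↔ KInvariantMeasure μ p := by
  refine forall₂_congr fun A _ => ?_
  rw [lintegral_smul_measure, Measure.smul_apply, smul_eq_mul, smul_eq_mul,
    ENNReal.mul_right_inj hc₀ hc]

lemma kInvariantMeasure_comp_iff {μ : Measure S} (p : S → Measure S) (e : S ≃ᵐ S)
    (he : MeasurePreserving e μ μ) :
    KInvariantMeasure μ (fun x => p (e x)) ↔ KInvariantMeasure μ p := by
  refine forall₂_congr fun A _ => ?_
  rw [he.lintegral_comp_emb e.measurableEmbedding (fun x => p x A)]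

end KInvariant

lemma lintegral_eq_mul_lintegral_comp_affine (f : ℝ → ℝ≥0∞) (a : ℝ) {b : ℝ} (hb : 0 < b) :
    ∫⁻ v, f v = ENNReal.ofReal b * ∫⁻ x, f (a + x * b) := by
  have hmap : Measure.map (fun x : ℝ => a + x * b) volume = ENNReal.ofReal b⁻¹ • volume := by
    rw [show (fun x : ℝ => a + x * b) = (a + ·) ∘ (b * ·) by funext x; simp [mul_comm],
      ← Measure.map_map (by fun_prop) (by fun_prop), Real.map_volume_mul_left hb.ne',
      Measure.map_smul, (measurePreserving_add_left volume a).map_eq, abs_of_pos (inv_pos.2 hb)]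
  have hemb : MeasurableEmbedding fun x : ℝ => a + x * b :=
    ((Homeomorph.mulRight₀ b hb.ne').trans (Homeomorph.addLeft a)).measurableEmbedding
  rw [← hemb.lintegral_map, hmap, lintegral_smul_measure, smul_eq_mul, ← mul_assoc,
    ← ENNReal.ofReal_mul hb.le, mul_inv_cancel₀ hb.ne', ENNReal.ofReal_one, one_mul]

section Ellipse

variable {γ : ℝ}

def chordDomain (γ : ℝ) : Set ℝ := {u | u ^ 2 * Real.sin γ ^ 2 < 1}

def chordHalfLength (γ u : ℝ) : ℝ := Real.sqrt (1 - u ^ 2 * Real.sin γ ^ 2)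

lemma measurableSet_chordDomain : MeasurableSet (chordDomain γ) :=
  measurableSet_lt (by fun_prop) measurable_const

lemma measurable_chordHalfLength : Measurable (chordHalfLength γ) := by
  unfold chordHalfLength; fun_prop

lemma chordHalfLength_pos {u : ℝ} (hu : u ∈ chordDomain γ) : 0 < chordHalfLength γ u :=
  Real.sqrt_pos.2 (sub_pos.2 hu)

lemma chordHalfLength_le_one (u : ℝ) : chordHalfLength γ u ≤ 1 :=
  Real.sqrt_le_one.2 (by nlinarith [sq_nonneg (u * Real.sin γ)])

lemma chordDomain_eq_Ioo (hs : Real.sin γ ≠ 0) :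
    chordDomain γ = Ioo (-|Real.sin γ|⁻¹) |Real.sin γ|⁻¹ := by
  ext u
  change u ^ 2 * Real.sin γ ^ 2 < 1 ↔ _
  rw [mem_Ioo, ← abs_lt, ← mul_pow, sq_lt_one_iff_abs_lt_one,
    abs_mul, ← lt_div_iff₀ (abs_pos.2 hs), one_div]

lemma mem_Eset_iff {u v : ℝ} :
    (u, v) ∈ Eset γ ↔ (v + u * Real.cos γ) ^ 2 + u ^ 2 * Real.sin γ ^ 2 < 1 := by
  have h : (v + u * Real.cos γ) ^ 2 + u ^ 2 * Real.sin γ ^ 2 =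
      u ^ 2 + 2 * Real.cos γ * u * v + v ^ 2 := by
    linear_combination u ^ 2 * Real.sin_sq_add_cos_sq γ
  rw [h]; rfl

lemma measurableSet_Eset : MeasurableSet (Eset γ) :=
  measurableSet_lt (by fun_prop) measurable_const

lemma ellMap_add_mul_cos (u x : ℝ) :
    ellMap γ u x + u * Real.cos γ = x * chordHalfLength γ u := by
  rw [ellMap, chordHalfLength]; ring

lemma ellInv_ellMap {u : ℝ} (hu : u ∈ chordDomain γ) (x : ℝ) :
    ellInv γ u (ellMap γ u x) = x := by
  rw [ellInv, ellMap_add_mul_cos, ← chordHalfLength,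
    mul_div_cancel_right₀ x (chordHalfLength_pos hu).ne']

lemma mem_Eset_ellMap_iff {u : ℝ} (hu : u ∈ chordDomain γ) (x : ℝ) :
    (u, ellMap γ u x) ∈ Eset γ ↔ x ∈ Ioo (-1 : ℝ) 1 := by
  have ht : 0 < 1 - u ^ 2 * Real.sin γ ^ 2 := sub_pos.2 hu
  rw [mem_Eset_iff, ellMap_add_mul_cos, mul_pow, chordHalfLength, Real.sq_sqrt ht.le, mem_Ioo,
    ← abs_lt, ← sq_lt_one_iff_abs_lt_one]
  constructor <;> intro h <;> nlinarith

lemma notMem_Eset {u : ℝ} (hu : u ∉ chordDomain γ) (v : ℝ) : (u, v) ∉ Eset γ := by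
  rw [mem_Eset_iff]
  exact fun h => hu (by nlinarith [sq_nonneg (v + u * Real.cos γ)] : u ^ 2 * Real.sin γ ^ 2 < 1)

lemma lintegral_indicator_Eset_row (f : ℝ × ℝ → ℝ≥0∞) {u : ℝ} (hu : u ∈ chordDomain γ) :
    ∫⁻ v, (Eset γ).indicator f (u, v) =
      ENNReal.ofReal (chordHalfLength γ u) * ∫⁻ x in Ioo (-1 : ℝ) 1, f (u, ellMap γ u x) := by
  rw [lintegral_eq_mul_lintegral_comp_affine _ (-u * Real.cos γ) (chordHalfLength_pos hu),
    ← lintegral_indicator measurableSet_Ioo]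
  refine congrArg _ (lintegral_congr fun x => ?_)
  change (Eset γ).indicator f (u, ellMap γ u x) = _
  simp only [indicator, mem_Eset_ellMap_iff hu]

lemma setLIntegral_Eset {f : ℝ × ℝ → ℝ≥0∞} (hf : Measurable f) :
    ∫⁻ p in Eset γ, f p = ∫⁻ u in chordDomain γ,
      ENNReal.ofReal (chordHalfLength γ u) * ∫⁻ x in Ioo (-1 : ℝ) 1, f (u, ellMap γ u x) := by
  rw [← lintegral_indicator measurableSet_Eset, Measure.volume_eq_prod,
    lintegral_prod _ (hf.indicator measurableSet_Eset).aemeasurable,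
    ← lintegral_indicator measurableSet_chordDomain]
  congr 1 with u
  by_cases hu : u ∈ chordDomain γ
  · rw [indicator_of_mem hu, lintegral_indicator_Eset_row f hu]
  · simp [indicator_of_notMem hu, indicator_of_notMem (notMem_Eset hu _)]

lemma volume_restrict_Eset_apply {B : Set (ℝ × ℝ)} (hB : MeasurableSet B) :
    volume.restrict (Eset γ) B = ∫⁻ u in chordDomain γ, ENNReal.ofReal (chordHalfLength γ u) *
      volume.restrict (Ioo (-1 : ℝ) 1) {x | (u, ellMap γ u x) ∈ B} := by
  rw [← lintegral_indicator_one hB, setLIntegral_Eset (measurable_one.indicator hB)]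
  refine lintegral_congr fun u => congrArg _ ?_
  exact lintegral_indicator_one ((by unfold ellMap; fun_prop :
    Measurable fun x => (u, ellMap γ u x)) hB)

lemma volume_Eset :
    volume (Eset γ) = (∫⁻ u in chordDomain γ, ENNReal.ofReal (chordHalfLength γ u)) * 2 := by
  rw [← setLIntegral_one, setLIntegral_Eset measurable_const]
  simp only [setLIntegral_one, Real.volume_Ioo, sub_neg_eq_add, one_add_one_eq_two,
    ENNReal.ofReal_ofNat]
  exact lintegral_mul_const _ measurable_chordHalfLength.ennreal_ofReal

lemma lintegral_chordHalfLength_ne_zero (hs : Real.sin γ ≠ 0) :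
    ∫⁻ u in chordDomain γ, ENNReal.ofReal (chordHalfLength γ u) ≠ 0 := by
  refine ((setLIntegral_pos_iff measurable_chordHalfLength.ennreal_ofReal).2 ?_).ne'
  rw [inter_eq_right.2 fun u hu =>
      Function.mem_support.2 (ENNReal.ofReal_pos.2 (chordHalfLength_pos hu)).ne',
    chordDomain_eq_Ioo hs, Real.volume_Ioo, ENNReal.ofReal_pos]
  have := abs_pos.2 hs
  linarith [inv_pos.2 this]

lemma lintegral_chordHalfLength_ne_top (hs : Real.sin γ ≠ 0) :
    ∫⁻ u in chordDomain γ, ENNReal.ofReal (chordHalfLength γ u) ≠ ∞ := by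
  refine ((lintegral_mono fun u => ENNReal.ofReal_le_one.2 (chordHalfLength_le_one u)).trans_lt
    ?_).ne
  rw [setLIntegral_one, chordDomain_eq_Ioo hs]
  exact measure_Ioo_lt_top

end Ellipse

section ChordStep

variable {γ : ℝ}

def chordStep (γ : ℝ) (κ : Kernel ℝ ℝ) (p : ℝ × ℝ) : Measure (ℝ × ℝ) :=
  (κ (ellInv γ p.1 p.2)).map fun x => (p.1, ellMap γ p.1 x)

lemma chordStep_apply (κ : Kernel ℝ ℝ) (p : ℝ × ℝ) {B : Set (ℝ × ℝ)} (hB : MeasurableSet B) :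
    chordStep γ κ p B = κ (ellInv γ p.1 p.2) {x | (p.1, ellMap γ p.1 x) ∈ B} :=
  Measure.map_apply (by unfold ellMap; fun_prop) hB

lemma measurable_chordStep_apply (κ : Kernel ℝ ℝ) [IsSFiniteKernel κ] {B : Set (ℝ × ℝ)}
    (hB : MeasurableSet B) : Measurable fun p => chordStep γ κ p B := by
  simp_rw [chordStep_apply κ _ hB]
  exact Kernel.measurable_kernel_prodMk_left
    (κ := κ.comap (fun p : ℝ × ℝ => ellInv γ p.1 p.2) (by unfold ellInv; fun_prop))
    ((by unfold ellMap; fun_prop :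
      Measurable fun px : (ℝ × ℝ) × ℝ => (px.1.1, ellMap γ px.1.1 px.2)) hB)

lemma setLIntegral_chordStep (κ : Kernel ℝ ℝ) [IsSFiniteKernel κ] {B : Set (ℝ × ℝ)}
    (hB : MeasurableSet B) :
    ∫⁻ p in Eset γ, chordStep γ κ p B = ∫⁻ u in chordDomain γ,
      ENNReal.ofReal (chordHalfLength γ u) *
        ∫⁻ x in Ioo (-1 : ℝ) 1, κ x {x' | (u, ellMap γ u x') ∈ B} := by
  rw [setLIntegral_Eset (measurable_chordStep_apply κ hB)]
  refine setLIntegral_congr_fun measurableSet_chordDomain fun u hu => ?_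
  simp only [chordStep_apply κ _ hB, ellInv_ellMap hu]

theorem kInvariantMeasure_chordStep_iff (hs : Real.sin γ ≠ 0) (κ : Kernel ℝ ℝ)
    [IsSFiniteKernel κ] :
    KInvariantMeasure (volume.restrict (Eset γ)) (chordStep γ κ) ↔
      KInvariantMeasure (volume.restrict (Ioo (-1 : ℝ) 1)) κ := by
  constructor
  · intro h S hS
    -- test the invariance on the set of points whose chord coordinate lies in `S`
    have hB : MeasurableSet {p : ℝ × ℝ | ellInv γ p.1 p.2 ∈ S} :=
      (by unfold ellInv; fun_prop : Measurable fun p : ℝ × ℝ => ellInv γ p.1 p.2) hS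
    have hsection : ∀ u ∈ chordDomain γ,
        {x | (u, ellMap γ u x) ∈ {p : ℝ × ℝ | ellInv γ p.1 p.2 ∈ S}} = S := fun u hu => by
      ext x
      change ellInv γ u (ellMap γ u x) ∈ S ↔ x ∈ S
      rw [ellInv_ellMap hu]
    have hstep : ∫⁻ p in Eset γ, chordStep γ κ p {p | ellInv γ p.1 p.2 ∈ S} =
        (∫⁻ u in chordDomain γ, ENNReal.ofReal (chordHalfLength γ u)) *
          ∫⁻ x in Ioo (-1 : ℝ) 1, κ x S := by
      rw [setLIntegral_chordStep κ hB,
        ← lintegral_mul_const _ measurable_chordHalfLength.ennreal_ofReal]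
      exact setLIntegral_congr_fun measurableSet_chordDomain fun u hu => by rw [hsection u hu]
    have hvol : volume.restrict (Eset γ) {p | ellInv γ p.1 p.2 ∈ S} =
        (∫⁻ u in chordDomain γ, ENNReal.ofReal (chordHalfLength γ u)) *
          volume.restrict (Ioo (-1 : ℝ) 1) S := by
      rw [volume_restrict_Eset_apply hB,
        ← lintegral_mul_const _ measurable_chordHalfLength.ennreal_ofReal]
      exact setLIntegral_congr_fun measurableSet_chordDomain fun u hu => by rw [hsection u hu]
    have h' := h _ hB
    rw [hstep, hvol] at h'
    exact (ENNReal.mul_right_inj (lintegral_chordHalfLength_ne_zero hs)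
      (lintegral_chordHalfLength_ne_top hs)).1 h'
  · intro h B hB
    rw [setLIntegral_chordStep κ hB, volume_restrict_Eset_apply hB]
    refine setLIntegral_congr_fun measurableSet_chordDomain fun u _ => congrArg _ ?_
    exact h _ ((by unfold ellMap; fun_prop : Measurable fun x => (u, ellMap γ u x)) hB)

end ChordStep

section Estar

variable {γ : ℝ}

def qHat (q : Kernel ℝ ℝ) : Kernel ℝ ℝ := q.comap (-·) measurable_neg

instance (q : Kernel ℝ ℝ) [IsSFiniteKernel q] : IsSFiniteKernel (qHat q) := by
  unfold qHat; infer_instance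

lemma measurableEmbedding_sheet (s : ℝ) : MeasurableEmbedding fun p : ℝ × ℝ => (p.1, p.2, s) :=
  MeasurableEquiv.prodAssoc.measurableEmbedding.comp (measurableEmbedding_prod_mk_right s)

def lebesgueEstar (γ : ℝ) : Measure (ℝ × ℝ × ℝ) :=
  (volume.restrict (Eset γ)).map (fun p => (p.1, p.2, 1)) +
    (volume.restrict (Eset γ)).map (fun p => (p.1, p.2, -1))

lemma m2_eq_smul_lebesgueEstar : m2 γ = ((volume (Eset γ))⁻¹ * 2⁻¹) • lebesgueEstar γ := by
  rw [m2, Measure.prod_smul_left, Measure.prod_smul_right, Measure.prod_add, Measure.prod_dirac,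
    Measure.prod_dirac, smul_smul, Measure.map_smul, Measure.map_add _ _ (by fun_prop),
    Measure.map_map (by fun_prop) (by fun_prop), Measure.map_map (by fun_prop) (by fun_prop)]
  rfl

lemma kInvariantMeasure_m2_iff (hs : Real.sin γ ≠ 0) (p : ℝ × ℝ × ℝ → Measure (ℝ × ℝ × ℝ)) :
    KInvariantMeasure (m2 γ) p ↔ KInvariantMeasure (lebesgueEstar γ) p := by
  have hvol₀ : volume (Eset γ) ≠ 0 :=
    volume_Eset (γ := γ) ▸ mul_ne_zero (lintegral_chordHalfLength_ne_zero hs) two_ne_zero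
  have hvol : volume (Eset γ) ≠ ∞ := volume_Eset (γ := γ) ▸
    ENNReal.mul_ne_top (lintegral_chordHalfLength_ne_top hs) ENNReal.ofNat_ne_top
  rw [m2_eq_smul_lebesgueEstar]
  exact kInvariantMeasure_smul_iff (mul_ne_zero (ENNReal.inv_ne_zero.2 hvol) (by norm_num))
    (ENNReal.mul_ne_top (ENNReal.inv_ne_top.2 hvol₀) (by norm_num))

lemma lebesgueEstar_apply {A : Set (ℝ × ℝ × ℝ)} (hA : MeasurableSet A) :
    lebesgueEstar γ A = volume.restrict (Eset γ) {p | (p.1, p.2, 1) ∈ A} +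
      volume.restrict (Eset γ) {p | (p.1, p.2, -1) ∈ A} := by
  rw [lebesgueEstar, Measure.add_apply, Measure.map_apply (by fun_prop) hA,
    Measure.map_apply (by fun_prop) hA]
  rfl

lemma lintegral_lebesgueEstar (F : ℝ × ℝ × ℝ → ℝ≥0∞) :
    ∫⁻ w, F w ∂lebesgueEstar γ =
      (∫⁻ p in Eset γ, F (p.1, p.2, 1)) + ∫⁻ p in Eset γ, F (p.1, p.2, -1) := by
  rw [lebesgueEstar, lintegral_add_measure, (measurableEmbedding_sheet 1).lintegral_map,
    (measurableEmbedding_sheet (-1)).lintegral_map]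

lemma measurePreserving_swap_restrict_Eset :
    MeasurePreserving Prod.swap (volume.restrict (Eset γ)) (volume.restrict (Eset γ)) := by
  have hsymm : Prod.swap ⁻¹' Eset γ = Eset γ := by
    ext p
    change p.2 ^ 2 + 2 * Real.cos γ * p.2 * p.1 + p.1 ^ 2 < 1 ↔
      p.1 ^ 2 + 2 * Real.cos γ * p.1 * p.2 + p.2 ^ 2 < 1
    ring_nf
  have := (Measure.measurePreserving_swap (μ := (volume : Measure ℝ)) (ν := volume))
    |>.restrict_preimage (measurableSet_Eset (γ := γ))
  rwa [hsymm, ← Measure.volume_eq_prod] at this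

lemma Qfun_apply_one (q : Kernel ℝ ℝ) {A : Set (ℝ × ℝ × ℝ)} (hA : MeasurableSet A) (p : ℝ × ℝ) :
    Qfun γ q (p.1, p.2, 1) A =
      chordStep γ (qHat q) p {p' | (p'.1, p'.2, -1) ∈ A} := by
  rw [chordStep_apply (B := {p' | (p'.1, p'.2, -1) ∈ A}) _ _
      ((measurableEmbedding_sheet (-1)).measurable hA), Qfun,
    if_neg (by norm_num), Measure.map_apply (by unfold ellMap; fun_prop) hA]
  rfl

lemma Qfun_apply_neg_one (q : Kernel ℝ ℝ) {A : Set (ℝ × ℝ × ℝ)} (hA : MeasurableSet A)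
    (p : ℝ × ℝ) :
    Qfun γ q (p.1, p.2, -1) A =
      chordStep γ (qHat q) p.swap {p' | (p'.2, p'.1, 1) ∈ A} := by
  rw [chordStep_apply (B := {p' | (p'.2, p'.1, 1) ∈ A}) _ _
      ((by fun_prop : Measurable fun p' : ℝ × ℝ => (p'.2, p'.1, (1 : ℝ))) hA),
    Qfun, if_pos rfl, Measure.map_apply (by unfold ellMap; fun_prop) hA]
  rfl

theorem kInvariantMeasure_lebesgueEstar_Qfun_iff (q : Kernel ℝ ℝ) :
    KInvariantMeasure (lebesgueEstar γ) (Qfun γ q) ↔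
      KInvariantMeasure (volume.restrict (Eset γ)) (chordStep γ (qHat q)) := by
  have hQ : ∀ A, MeasurableSet A → ∫⁻ w, Qfun γ q w A ∂lebesgueEstar γ =
      (∫⁻ p in Eset γ, chordStep γ (qHat q) p {p' | (p'.1, p'.2, -1) ∈ A}) +
        ∫⁻ p in Eset γ, chordStep γ (qHat q) p {p' | (p'.2, p'.1, 1) ∈ A} := by
    intro A hA
    simp_rw [lintegral_lebesgueEstar, Qfun_apply_one q hA, Qfun_apply_neg_one q hA]
    rw [measurePreserving_swap_restrict_Eset.lintegral_comp_emb
      MeasurableEquiv.prodComm.measurableEmbedding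
      (fun p => chordStep γ (qHat q) p {p' | (p'.2, p'.1, 1) ∈ A})]
  constructor
  · intro h B hB
    -- a set on the sheet `s = 1` is reached only from the sheet `s = -1`, along horizontal chords
    have hA : MeasurableSet {w : ℝ × ℝ × ℝ | w.2.2 = 1 ∧ (w.2.1, w.1) ∈ B} :=
      (measurableSet_eq_fun (by fun_prop) measurable_const).inter
        ((by fun_prop : Measurable fun w : ℝ × ℝ × ℝ => (w.2.1, w.1)) hB)
    have h' := h _ hA
    rw [hQ _ hA, lebesgueEstar_apply hA] at h'
    have hswap : volume.restrict (Eset γ) {p | (p.2, p.1) ∈ B} = volume.restrict (Eset γ) B :=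
      measurePreserving_swap_restrict_Eset.measure_preimage hB.nullMeasurableSet
    norm_num [hswap] at h'
    exact h'
  · intro h A hA
    have hswap : volume.restrict (Eset γ) {p | (p.2, p.1, 1) ∈ A} =
        volume.restrict (Eset γ) {p | (p.1, p.2, 1) ∈ A} :=
      measurePreserving_swap_restrict_Eset.measure_preimage
        ((measurableEmbedding_sheet 1).measurable hA).nullMeasurableSet
    rw [hQ A hA, h {p | (p.1, p.2, -1) ∈ A} ((measurableEmbedding_sheet (-1)).measurable hA),
      h {p | (p.2, p.1, 1) ∈ A}
        ((by fun_prop : Measurable fun p : ℝ × ℝ => (p.2, p.1, (1 : ℝ))) hA),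
      lebesgueEstar_apply hA, hswap, add_comm]

end Estar

/-- `m¹` is invariant for `q` iff `m¹` is invariant for `q̂` iff
`m²` is invariant for `Q`. -/
theorem invariance_equivalence (γ : ℝ) (hγ : γ ∈ Ioo 0 Real.pi)
    (q : Kernel ℝ ℝ) (hq : IsMarkovOnInterval q) :
    (KInvariantMeasure m1 (fun x => q x) ↔ KInvariantMeasure m1 (fun x => q (-x))) ∧
    (KInvariantMeasure m1 (fun x => q x) ↔ KInvariantMeasure (m2 γ) (Qfun γ q)) := by
  have : IsMarkovKernel q := hq.1
  have hs : Real.sin γ ≠ 0 := (Real.sin_pos_of_pos_of_lt_pi hγ.1 hγ.2).ne'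
  have hm1 (p : ℝ → Measure ℝ) :
      KInvariantMeasure m1 p ↔ KInvariantMeasure (volume.restrict (Ioo (-1 : ℝ) 1)) p :=
    kInvariantMeasure_smul_iff (by norm_num) (by norm_num)
  have hneg : KInvariantMeasure (volume.restrict (Ioo (-1 : ℝ) 1)) (fun x => q (-x)) ↔
      KInvariantMeasure (volume.restrict (Ioo (-1 : ℝ) 1)) (fun x => q x) :=
    kInvariantMeasure_comp_iff _ (MeasurableEquiv.neg ℝ) <| by
      simpa using (Measure.measurePreserving_neg (volume : Measure ℝ)).restrict_preimage
        (measurableSet_Ioo (a := (-1 : ℝ)) (b := 1))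
  have hm2 : KInvariantMeasure (m2 γ) (Qfun γ q) ↔
      KInvariantMeasure (volume.restrict (Ioo (-1 : ℝ) 1)) (fun x => q (-x)) := by
    rw [kInvariantMeasure_m2_iff hs, kInvariantMeasure_lebesgueEstar_Qfun_iff]
    exact kInvariantMeasure_chordStep_iff hs (qHat q)
  rw [hm1, hm1, hm2, hneg]
  exact ⟨Iff.rfl, Iff.rfl⟩
end
end

section
/- Let γ = π/2, so that E is the open unit disk, and let q be the Markov kernel on (−1,1) given by: q(x,·) = Lebesgue measure restricted to (0,1) if x ∈ (−1,0); q(x,·) = Lebesgue measure restricted to (−1,0) if x ∈ (0,1); and q(0,·) = m¹. Then m¹ is a reversible and ergodic measure for q, and yet m² is not ergodic for Q: for each of the four open coordinate quadrants Qd_i of ℝ², the set (E ∩ Qd_i) × {−1,1} is (m²,Q)-invariant and has m²-measure 1/4. -/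
open MeasureTheory ProbabilityTheory Set Pointwise
open scoped ENNReal

noncomputable section

/-!
The kernel `q` jumps from each half of `(-1, 1)` to the uniform law on the other half. Hence
`∫ k(x) ∫ j dq(x) dm¹(x) = ½ (∫₋ k ∫₊ j + ∫₊ k ∫₋ j)` is symmetric in `j` and `k`, and an
invariant set charging one half must fill the other one, which gives ergodicity of `m¹`.

At `γ = π/2` the chords are axis-parallel, `ℓ_u x = x √(1 - u²)`, and a step of `Q` replaces the
moving coordinate `c = ℓ(x)` by `ℓ(x')` with `x' ~ q(-x)`. Since `-x` has the opposite sign of `c`,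
`x'` and hence the new coordinate have the sign of `c`: no step of `Q` ever changes the sign of a
coordinate. So every quadrant of the disk is `Q`-invariant, and the reflections of the disk show
that each has `m²`-measure `1/4`.
-/

lemma measure_eq_add_inter_pos_inter_neg {α : Type*} [MeasurableSpace α] {μ : Measure α}
    {f : α → ℝ} (hf : Measurable f) (h0 : μ (f ⁻¹' {0}) = 0) (S : Set α) :
    μ S = μ (S ∩ {x | 0 < f x}) + μ (S ∩ {x | 0 < -f x}) := by
  rw [← measure_inter_add_sdiff S (measurableSet_lt measurable_const hf)]
  congr 1
  refine le_antisymm ?_ (measure_mono fun x ⟨hxS, hx⟩ => ⟨hxS, fun h => by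
    simp only [mem_ofPred_eq] at h hx; linarith⟩)
  calc μ (S \ {x | 0 < f x}) ≤ μ (S ∩ {x | 0 < -f x} ∪ f ⁻¹' {0}) := by
        refine measure_mono fun x ⟨hxS, hx⟩ => ?_
        simp only [mem_ofPred_eq, not_lt] at hx
        rcases hx.lt_or_eq with h | h
        · exact Or.inl ⟨hxS, by simpa using h⟩
        · exact Or.inr h
    _ ≤ μ (S ∩ {x | 0 < -f x}) + μ (f ⁻¹' {0}) := measure_union_le _ _
    _ = μ (S ∩ {x | 0 < -f x}) := by rw [h0, add_zero]

lemma measurePreserving_mul_left_of_abs_eq_one {a : ℝ} (ha : |a| = 1) :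
    MeasurePreserving (a * ·) volume volume :=
  ⟨measurable_const_mul a, by
    rw [Real.map_volume_mul_left (abs_ne_zero.1 (ha ▸ one_ne_zero)), abs_inv, ha]; simp⟩

lemma BddCtsOn.integrableOn {X : Type*} [TopologicalSpace X] [MeasurableSpace X]
    [OpensMeasurableSpace X] {μ : Measure X} {S s : Set X} {f : X → ℝ} (hf : BddCtsOn S f)
    (hs : s ⊆ S) (hsm : MeasurableSet s) (hμs : μ s ≠ ∞) : IntegrableOn f s μ := by
  obtain ⟨hcont, C, hC⟩ := hf
  refine Integrable.mono' (integrableOn_const hμs) ((hcont.mono hs).aestronglyMeasurable hsm) ?_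
  exact (ae_restrict_iff' hsm).2
    (.of_forall fun x hx => (Real.norm_eq_abs _).trans_le (hC x (hs hx)))

lemma volume_restrict_Ioo_eq_add {a b c : ℝ} (hab : a ≤ b) (hbc : b ≤ c) :
    volume.restrict (Ioo a c) = volume.restrict (Ioo a b) + volume.restrict (Ioo b c) := by
  simp only [Measure.restrict_congr_set Ioo_ae_eq_Ioc]
  rw [← Ioc_union_Ioc_eq_Ioc hab hbc,
    Measure.restrict_union (Ioc_disjoint_Ioc_of_le le_rfl) measurableSet_Ioc]

lemma m1_eq_smul_add :
    m1 = (2 : ℝ≥0∞)⁻¹ • (volume.restrict (Ioo (-1 : ℝ) 0) + volume.restrict (Ioo (0 : ℝ) 1)) := by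
  rw [m1, volume_restrict_Ioo_eq_add (b := 0) (by norm_num) (by norm_num)]

lemma m1_apply (A : Set ℝ) :
    m1 A = 2⁻¹ * (volume (A ∩ Ioo (-1 : ℝ) 0) + volume (A ∩ Ioo (0 : ℝ) 1)) := by
  rw [m1_eq_smul_add, Measure.smul_apply, smul_eq_mul, Measure.add_apply,
    Measure.restrict_apply' measurableSet_Ioo, Measure.restrict_apply' measurableSet_Ioo]

section KernelConstOn

variable (q : Kernel ℝ ℝ)

lemma setLIntegral_kernel_eq_of_eqOn {μ : Measure ℝ} {s : Set ℝ} (hs : MeasurableSet s)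
    (hq : ∀ x ∈ s, q x = μ) (A : Set ℝ) : ∫⁻ x in s, q x A = μ A * volume s := by
  rw [setLIntegral_congr_fun hs (fun x hx => by rw [hq x hx]), setLIntegral_const]

lemma setIntegral_mul_integral_kernel_eq_of_eqOn {μ : Measure ℝ} {s : Set ℝ}
    (hs : MeasurableSet s) (hq : ∀ x ∈ s, q x = μ) (j k : ℝ → ℝ) :
    ∫ x in s, k x * ∫ y, j y ∂(q x) = (∫ x in s, k x) * ∫ y, j y ∂μ := by
  rw [setIntegral_congr_fun hs (fun x hx => by rw [hq x hx]), integral_mul_const]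

end KernelConstOn

def SwapsHalves (q : Kernel ℝ ℝ) : Prop :=
  (∀ x ∈ Ioo (-1 : ℝ) 0, q x = volume.restrict (Ioo (0 : ℝ) 1)) ∧
    ∀ x ∈ Ioo (0 : ℝ) 1, q x = volume.restrict (Ioo (-1 : ℝ) 0)

namespace SwapsHalves

variable {q : Kernel ℝ ℝ}

lemma integral_mul_integral_kernel_m1 (hq : SwapsHalves q) {j k : ℝ → ℝ}
    (hk : BddCtsOn (Ioo (-1 : ℝ) 1) k) :
    ∫ x, k x * ∫ y, j y ∂(q x) ∂m1 =
      2⁻¹ * ((∫ x in Ioo (-1 : ℝ) 0, k x) * (∫ y in Ioo (0 : ℝ) 1, j y)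
        + (∫ x in Ioo (0 : ℝ) 1, k x) * (∫ y in Ioo (-1 : ℝ) 0, j y)) := by
  have hk_int : ∀ {a b : ℝ} {μ : Measure ℝ}, Ioo a b ⊆ Ioo (-1) 1 → (∀ x ∈ Ioo a b, q x = μ) →
      IntegrableOn (fun x => k x * ∫ y, j y ∂(q x)) (Ioo a b) := fun hs hqμ =>
    IntegrableOn.congr_fun
      ((hk.integrableOn hs measurableSet_Ioo measure_Ioo_lt_top.ne).mul_const _)
      (fun x hx => by rw [hqμ x hx]) measurableSet_Ioo
  have hL : Ioo (-1 : ℝ) 0 ⊆ Ioo (-1) 1 := Ioo_subset_Ioo_right zero_le_one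
  have hR : Ioo (0 : ℝ) 1 ⊆ Ioo (-1) 1 := Ioo_subset_Ioo_left (by norm_num)
  rw [m1_eq_smul_add, integral_smul_measure,
    integral_add_measure (hk_int hL hq.1) (hk_int hR hq.2),
    setIntegral_mul_integral_kernel_eq_of_eqOn q measurableSet_Ioo hq.1,
    setIntegral_mul_integral_kernel_eq_of_eqOn q measurableSet_Ioo hq.2]
  simp [ENNReal.toReal_inv]

lemma reversible1 (hq : SwapsHalves q) : Reversible1 q := by
  intro j k hj hk
  rw [hq.integral_mul_integral_kernel_m1 hk, hq.integral_mul_integral_kernel_m1 hj]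
  ring

lemma kInvariantMeasure_m1 (hq : SwapsHalves q) : KInvariantMeasure m1 (fun x => q x) := by
  intro A _
  rw [m1_eq_smul_add, lintegral_smul_measure, lintegral_add_measure,
    setLIntegral_kernel_eq_of_eqOn q measurableSet_Ioo hq.1,
    setLIntegral_kernel_eq_of_eqOn q measurableSet_Ioo hq.2, ← m1_eq_smul_add, m1_apply]
  simp [Measure.restrict_apply' measurableSet_Ioo, Real.volume_Ioo, add_comm]

lemma kErgodicMeasure_m1 (hq : SwapsHalves q) : KErgodicMeasure m1 (fun x => q x) := by
  refine ⟨hq.kInvariantMeasure_m1, fun A hA hinv => ?_⟩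
  -- an invariant set meeting one half in positive measure contains almost all of the other half
  have fill : ∀ {a b : ℝ} {μ : Measure ℝ}, Ioo a b ⊆ Ioo (-1) 1 → (∀ x ∈ Ioo a b, q x = μ) →
      volume (A ∩ Ioo a b) ≠ 0 → μ A = 1 := by
    intro a b μ hab hqμ hA0
    have hm1 : m1 (A ∩ Ioo a b) ≠ 0 := by
      rw [m1, Measure.smul_apply, Measure.restrict_apply' measurableSet_Ioo,
        inter_eq_left.2 (inter_subset_right.trans hab)]
      simpa using hA0
    obtain ⟨x, ⟨hxA, hx⟩, hqx⟩ := Measure.exists_mem_of_measure_ne_zero_of_ae hm1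
      (ae_restrict_of_ae hinv)
    rw [← hqμ x hx]
    exact hqx hxA
  have hL : volume (A ∩ Ioo (-1 : ℝ) 0) ≠ 0 → volume (A ∩ Ioo (0 : ℝ) 1) = 1 := fun h => by
    simpa [Measure.restrict_apply hA] using fill (Ioo_subset_Ioo_right zero_le_one) hq.1 h
  have hR : volume (A ∩ Ioo (0 : ℝ) 1) ≠ 0 → volume (A ∩ Ioo (-1 : ℝ) 0) = 1 := fun h => by
    simpa [Measure.restrict_apply hA] using fill (Ioo_subset_Ioo_left (by norm_num)) hq.2 h
  rw [m1_apply]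
  rcases eq_or_ne (volume (A ∩ Ioo (-1 : ℝ) 0)) 0 with h₁ | h₁
  · rcases eq_or_ne (volume (A ∩ Ioo (0 : ℝ) 1)) 0 with h₂ | h₂
    · simp [h₁, h₂]
    · exact absurd (hR h₂) (by simp [h₁])
  · right
    rw [hL h₁, hR (by simp [hL h₁]), one_add_one_eq_two,
      ENNReal.inv_mul_cancel two_ne_zero ENNReal.ofNat_ne_top]

end SwapsHalves

lemma mem_Eset_pi_div_two {p : ℝ × ℝ} : p ∈ Eset (Real.pi / 2) ↔ p.1 ^ 2 + p.2 ^ 2 < 1 := by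
  simp [Eset, Real.cos_pi_div_two]

lemma isOpen_Eset (γ : ℝ) : IsOpen (Eset γ) :=
  isOpen_lt (by fun_prop) continuous_const

lemma volume_Eset_pi_div_two_ne_zero : volume (Eset (Real.pi / 2)) ≠ 0 :=
  (isOpen_Eset _).measure_ne_zero _ ⟨0, by simp [mem_Eset_pi_div_two]⟩

lemma volume_Eset_pi_div_two_ne_top : volume (Eset (Real.pi / 2)) ≠ ⊤ := by
  refine ne_top_of_le_ne_top (measure_ball_lt_top (x := (0 : ℝ × ℝ)) (r := 1)).ne
    (measure_mono fun p hp => ?_)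
  rw [mem_Eset_pi_div_two] at hp
  rw [mem_ball_zero_iff, Prod.norm_def, max_lt_iff, Real.norm_eq_abs, Real.norm_eq_abs,
    ← sq_lt_one_iff_abs_lt_one, ← sq_lt_one_iff_abs_lt_one]
  constructor <;> nlinarith [sq_nonneg p.1, sq_nonneg p.2]

def quadrant (s t : ℝ) : Set (ℝ × ℝ) := {p | 0 < s * p.1} ∩ {p | 0 < t * p.2}

lemma measurableSet_quadrant (s t : ℝ) : MeasurableSet (quadrant s t) :=
  (measurableSet_lt measurable_const (by fun_prop)).inter
    (measurableSet_lt measurable_const (by fun_prop))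

lemma volume_Eset_pi_div_two_inter_quadrant {s t : ℝ} (hs : s = 1 ∨ s = -1)
    (ht : t = 1 ∨ t = -1) :
    volume (Eset (Real.pi / 2) ∩ quadrant s t) = volume (Eset (Real.pi / 2) ∩ quadrant 1 1) := by
  have hs2 : s ^ 2 = 1 := by rcases hs with rfl | rfl <;> norm_num
  have ht2 : t ^ 2 = 1 := by rcases ht with rfl | rfl <;> norm_num
  have hφ : MeasurePreserving (Prod.map (s * ·) (t * ·)) (volume : Measure (ℝ × ℝ)) volume :=
    (measurePreserving_mul_left_of_abs_eq_one ((abs_eq zero_le_one).2 hs)).prod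
      (measurePreserving_mul_left_of_abs_eq_one ((abs_eq zero_le_one).2 ht))
  have hpre : Prod.map (s * ·) (t * ·) ⁻¹' (Eset (Real.pi / 2) ∩ quadrant s t) =
      Eset (Real.pi / 2) ∩ quadrant 1 1 := by
    ext p
    simp only [quadrant, mem_preimage, mem_inter_iff, mem_Eset_pi_div_two, mem_ofPred_eq,
      Prod.map_fst, Prod.map_snd, mul_pow, hs2, ht2, ← mul_assoc, ← sq, one_mul]
  rw [← hpre, hφ.measure_preimage
    ((isOpen_Eset _).measurableSet.inter (measurableSet_quadrant s t)).nullMeasurableSet]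

lemma volume_Eset_pi_div_two_eq_four_mul :
    volume (Eset (Real.pi / 2)) = 4 * volume (Eset (Real.pi / 2) ∩ quadrant 1 1) := by
  have split_fst := measure_eq_add_inter_pos_inter_neg (μ := (volume : Measure (ℝ × ℝ)))
    measurable_fst <| (Measure.quasiMeasurePreserving_fst (μ := (volume : Measure ℝ))
      (ν := (volume : Measure ℝ))).preimage_null (measure_singleton 0)
  have split_snd := measure_eq_add_inter_pos_inter_neg (μ := (volume : Measure (ℝ × ℝ)))
    measurable_snd <| (Measure.quasiMeasurePreserving_snd (μ := (volume : Measure ℝ))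
      (ν := (volume : Measure ℝ))).preimage_null (measure_singleton 0)
  have h₁ := volume_Eset_pi_div_two_inter_quadrant (.inl rfl) (.inr rfl)
  have h₂ := volume_Eset_pi_div_two_inter_quadrant (.inr rfl) (.inl rfl)
  have h₃ := volume_Eset_pi_div_two_inter_quadrant (.inr rfl) (.inr rfl)
  simp only [quadrant, ← inter_assoc, one_mul, neg_one_mul] at h₁ h₂ h₃ ⊢
  rw [split_fst, split_snd (_ ∩ {p | 0 < p.1}), split_snd (_ ∩ {p | 0 < -p.1}), h₁, h₂, h₃]
  ring

def quadrantStar (s t : ℝ) : Set (ℝ × ℝ × ℝ) :=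
  {w | (w.1, w.2.1) ∈ Eset (Real.pi / 2) ∧ 0 < s * w.1 ∧ 0 < t * w.2.1 ∧
    (w.2.2 = 1 ∨ w.2.2 = -1)}

lemma measurableSet_quadrantStar (s t : ℝ) : MeasurableSet (quadrantStar s t) := by
  have hE : MeasurableSet (Eset (Real.pi / 2)) := (isOpen_Eset _).measurableSet
  have hsign : MeasurableSet ({1, -1} : Set ℝ) := (measurableSet_singleton _).insert _
  exact (measurable_fst.prodMk (measurable_fst.comp measurable_snd) hE).inter
    ((measurableSet_lt measurable_const (measurable_fst.const_mul s)).inter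
      ((measurableSet_lt measurable_const (measurable_snd.fst.const_mul t)).inter
        (measurable_snd.comp measurable_snd hsign)))

lemma m2_quadrantStar {s t : ℝ} (hs : s = 1 ∨ s = -1) (ht : t = 1 ∨ t = -1) :
    m2 (Real.pi / 2) (quadrantStar s t) = 1 / 4 := by
  have hpre : (fun p : (ℝ × ℝ) × ℝ => (p.1.1, p.1.2, p.2)) ⁻¹' quadrantStar s t =
      (Eset (Real.pi / 2) ∩ quadrant s t) ×ˢ ({1, -1} : Set ℝ) := by
    ext ⟨⟨u, v⟩, σ⟩
    simp [quadrantStar, quadrant, and_assoc]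
  have hsign : ((2 : ℝ≥0∞)⁻¹ • (Measure.dirac (1 : ℝ) + Measure.dirac (-1 : ℝ)))
      ({1, -1} : Set ℝ) = 1 := by
    simp [ENNReal.inv_two_add_inv_two]
  have hc₀ : volume (Eset (Real.pi / 2) ∩ quadrant 1 1) ≠ 0 := fun h =>
    volume_Eset_pi_div_two_ne_zero (by rw [volume_Eset_pi_div_two_eq_four_mul, h, mul_zero])
  have hc_top : volume (Eset (Real.pi / 2) ∩ quadrant 1 1) ≠ ⊤ :=
    ne_top_of_le_ne_top volume_Eset_pi_div_two_ne_top (measure_mono inter_subset_left)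
  rw [m2, Measure.map_apply (by fun_prop) (measurableSet_quadrantStar s t), hpre,
    Measure.prod_prod, hsign, mul_one, Measure.smul_apply, smul_eq_mul,
    Measure.restrict_apply ((isOpen_Eset _).measurableSet.inter (measurableSet_quadrant s t)),
    inter_eq_left.2 inter_subset_left, volume_Eset_pi_div_two_inter_quadrant hs ht,
    volume_Eset_pi_div_two_eq_four_mul, ENNReal.mul_inv (.inl (by norm_num)) (.inl (by norm_num)),
    mul_assoc, ENNReal.inv_mul_cancel hc₀ hc_top, mul_one, one_div]

lemma div_sqrt_one_sub_sq_mem_Ioo {u v : ℝ} (h : u ^ 2 + v ^ 2 < 1) :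
    v / √(1 - u ^ 2) ∈ Ioo (-1 : ℝ) 1 := by
  have hr : 0 < √(1 - u ^ 2) := Real.sqrt_pos.2 (by nlinarith [sq_nonneg v])
  rw [mem_Ioo, ← abs_lt, abs_div, abs_of_pos hr, div_lt_one hr, ← Real.sqrt_sq_eq_abs]
  exact Real.sqrt_lt_sqrt (sq_nonneg v) (by linarith)

lemma sq_add_sq_mul_sqrt_one_sub_sq_lt_one {u x : ℝ} (hu : u ^ 2 < 1) (hx : x ∈ Ioo (-1 : ℝ) 1) :
    u ^ 2 + (x * √(1 - u ^ 2)) ^ 2 < 1 := by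
  have hx2 : x ^ 2 < 1 := by nlinarith [hx.1, hx.2]
  rw [mul_pow, Real.sq_sqrt (by linarith)]
  nlinarith

lemma Qfun_pi_div_two_of_neg_one (q : Kernel ℝ ℝ) (u v : ℝ) :
    Qfun (Real.pi / 2) q (u, v, -1) =
      (q (-(u / √(1 - v ^ 2)))).map fun x => (x * √(1 - v ^ 2), v, 1) := by
  simp [Qfun, ellMap, ellInv, Real.cos_pi_div_two, Real.sin_pi_div_two]

lemma Qfun_pi_div_two_of_one (q : Kernel ℝ ℝ) (u v : ℝ) :
    Qfun (Real.pi / 2) q (u, v, 1) =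
      (q (-(v / √(1 - u ^ 2)))).map fun x => (u, x * √(1 - u ^ 2), -1) := by
  have h : (1 : ℝ) ≠ -1 := by norm_num
  simp [Qfun, ellMap, ellInv, Real.cos_pi_div_two, Real.sin_pi_div_two, h]

namespace SwapsHalves

variable {q : Kernel ℝ ℝ}

-- `q` sends each half of `(-1, 1)` to the other one, so `q (-z)` lives on the half containing `z`.
lemma apply_neg_eq_one (hq : SwapsHalves q) {s z : ℝ} (hs : s = 1 ∨ s = -1)
    (hz : z ∈ Ioo (-1 : ℝ) 1) (hsz : 0 < s * z) {T : Set ℝ}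
    (hT : ∀ x ∈ Ioo (-1 : ℝ) 1, 0 < s * x → x ∈ T) : q (-z) T = 1 := by
  rcases hs with rfl | rfl
  · rw [one_mul] at hsz
    rw [hq.1 (-z) ⟨by linarith [hz.2], by linarith⟩, Measure.restrict_apply_superset
      fun x hx => hT x (Ioo_subset_Ioo_left (by norm_num) hx) (by simpa using hx.1)]
    simp
  · rw [neg_one_mul, neg_pos] at hsz
    rw [hq.2 (-z) ⟨by linarith, by linarith [hz.1]⟩, Measure.restrict_apply_superset
      fun x hx => hT x (Ioo_subset_Ioo_right zero_le_one hx) (by simpa using hx.2)]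
    simp

lemma Qfun_quadrantStar (hq : SwapsHalves q) {s t : ℝ} (hs : s = 1 ∨ s = -1)
    (ht : t = 1 ∨ t = -1) {w : ℝ × ℝ × ℝ} (hw : w ∈ quadrantStar s t) :
    Qfun (Real.pi / 2) q w (quadrantStar s t) = 1 := by
  obtain ⟨u, v, σ⟩ := w
  obtain ⟨hE, hsu, htv, rfl | rfl⟩ := hw <;> dsimp only at hE hsu htv <;>
    rw [mem_Eset_pi_div_two] at hE
  · have hu : u ^ 2 < 1 := by nlinarith [sq_nonneg v]
    have hr : 0 < √(1 - u ^ 2) := Real.sqrt_pos.2 (by linarith)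
    rw [Qfun_pi_div_two_of_one, Measure.map_apply (by fun_prop) (measurableSet_quadrantStar s t)]
    refine hq.apply_neg_eq_one ht (div_sqrt_one_sub_sq_mem_Ioo hE)
      (by rw [mul_div_assoc']; exact div_pos htv hr) fun x hx htx => ⟨?_, hsu, ?_, .inr rfl⟩
    · exact mem_Eset_pi_div_two.2 (sq_add_sq_mul_sqrt_one_sub_sq_lt_one hu hx)
    · dsimp only; rw [← mul_assoc]; exact mul_pos htx hr
  · have hv : v ^ 2 < 1 := by nlinarith [sq_nonneg u]
    have hr : 0 < √(1 - v ^ 2) := Real.sqrt_pos.2 (by linarith)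
    rw [Qfun_pi_div_two_of_neg_one,
      Measure.map_apply (by fun_prop) (measurableSet_quadrantStar s t)]
    refine hq.apply_neg_eq_one hs (div_sqrt_one_sub_sq_mem_Ioo (by linarith))
      (by rw [mul_div_assoc']; exact div_pos hsu hr) fun x hx hsx => ⟨?_, ?_, htv, .inl rfl⟩
    · exact mem_Eset_pi_div_two.2 (by linarith [sq_add_sq_mul_sqrt_one_sub_sq_lt_one hv hx])
    · dsimp only; rw [← mul_assoc]; exact mul_pos hsx hr

end SwapsHalves

theorem counterexample_right_angle_general
    (q : Kernel ℝ ℝ)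
    (hq1 : ∀ x ∈ Ioo (-1 : ℝ) 0, q x = volume.restrict (Ioo (0 : ℝ) 1))
    (hq2 : ∀ x ∈ Ioo (0 : ℝ) 1, q x = volume.restrict (Ioo (-1 : ℝ) 0)) :
    Reversible1 q ∧
    KErgodicMeasure m1 (fun x => q x) ∧
    ¬ KErgodicMeasure (m2 (Real.pi / 2)) (Qfun (Real.pi / 2) q) ∧
    ∀ s t : ℝ, (s = 1 ∨ s = -1) → (t = 1 ∨ t = -1) →
      KInvariantSet (m2 (Real.pi / 2)) (Qfun (Real.pi / 2) q)
        {w : ℝ × ℝ × ℝ | (w.1, w.2.1) ∈ Eset (Real.pi / 2) ∧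
          0 < s * w.1 ∧ 0 < t * w.2.1 ∧ (w.2.2 = 1 ∨ w.2.2 = -1)} ∧
      m2 (Real.pi / 2) {w : ℝ × ℝ × ℝ | (w.1, w.2.1) ∈ Eset (Real.pi / 2) ∧
          0 < s * w.1 ∧ 0 < t * w.2.1 ∧ (w.2.2 = 1 ∨ w.2.2 = -1)} = 1 / 4 := by
  have hq : SwapsHalves q := ⟨hq1, hq2⟩
  have invariant : ∀ {s t : ℝ}, (s = 1 ∨ s = -1) → (t = 1 ∨ t = -1) →
      KInvariantSet (m2 (Real.pi / 2)) (Qfun (Real.pi / 2) q) (quadrantStar s t) :=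
    fun hs ht => .of_forall fun _ => hq.Qfun_quadrantStar hs ht
  refine ⟨hq.reversible1, hq.kErgodicMeasure_m1, fun ⟨_, herg⟩ => ?_,
    fun s t hs ht => ⟨invariant hs ht, m2_quadrantStar hs ht⟩⟩
  have h := herg _ (measurableSet_quadrantStar 1 1) (invariant (.inl rfl) (.inl rfl))
  rw [m2_quadrantStar (.inl rfl) (.inl rfl)] at h
  norm_num [ENNReal.div_eq_one_iff] at h

/-- the counterexample at `γ = π/2` (the unit disk): with `q` as described,
`m¹` is reversible and ergodic for `q`, yet `m²` is not ergodic for `Q`; each quadrant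
piece of `E*` is `(m²,Q)`-invariant of measure `1/4`. -/
theorem counterexample_right_angle
    (q : Kernel ℝ ℝ) (hq : IsMarkovOnInterval q)
    (hq1 : ∀ x ∈ Ioo (-1 : ℝ) 0, q x = volume.restrict (Ioo (0 : ℝ) 1))
    (hq2 : ∀ x ∈ Ioo (0 : ℝ) 1, q x = volume.restrict (Ioo (-1 : ℝ) 0))
    (hq0 : q 0 = m1) :
    Reversible1 q ∧
    KErgodicMeasure m1 (fun x => q x) ∧
    ¬ KErgodicMeasure (m2 (Real.pi / 2)) (Qfun (Real.pi / 2) q) ∧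
    ∀ s t : ℝ, (s = 1 ∨ s = -1) → (t = 1 ∨ t = -1) →
      KInvariantSet (m2 (Real.pi / 2)) (Qfun (Real.pi / 2) q)
        {w : ℝ × ℝ × ℝ | (w.1, w.2.1) ∈ Eset (Real.pi / 2) ∧
          0 < s * w.1 ∧ 0 < t * w.2.1 ∧ (w.2.2 = 1 ∨ w.2.2 = -1)} ∧
      m2 (Real.pi / 2) {w : ℝ × ℝ × ℝ | (w.1, w.2.1) ∈ Eset (Real.pi / 2) ∧
          0 < s * w.1 ∧ 0 < t * w.2.1 ∧ (w.2.2 = 1 ∨ w.2.2 = -1)} = 1 / 4 :=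
  counterexample_right_angle_general q hq1 hq2
end
end

section
/- Let R̃ : E* → E* be the involution R̃(u,v,s) = (v,u,−s) (which maps E* to itself since E is symmetric in u and v). Then R̃ pushes the kernel Q forward to itself: for every (u,v,s) ∈ E* and every Borel set A ⊂ E*, Q(R̃(u,v,s); R̃(A)) = Q(u,v,s; A). -/
open MeasureTheory ProbabilityTheory Set Pointwise
open scoped ENNReal

noncomputable section

/-- The involution `R̃(u,v,s) = (v,u,−s)` of `E*`. -/
def Rtilde (w : ℝ × ℝ × ℝ) : ℝ × ℝ × ℝ := (w.2.1, w.1, -w.2.2)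

lemma Rtilde_invol : Function.Involutive Rtilde := fun x => by simp [Rtilde]

lemma Rtilde_measurable : Measurable Rtilde := by
  unfold Rtilde; fun_prop

lemma ellMap_measurable (γ u : ℝ) : Measurable (ellMap γ u) := by
  unfold ellMap; fun_prop

/-- `R̃` pushes the kernel `Q` forward to itself. -/
theorem Rtilde_pushforward (γ : ℝ) (hγ : γ ∈ Ioo 0 Real.pi)
    (q : Kernel ℝ ℝ) (hq : IsMarkovOnInterval q) :
    ∀ w ∈ EstarSet γ, ∀ A : Set (ℝ × ℝ × ℝ), MeasurableSet A → A ⊆ EstarSet γ →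
      Qfun γ q (Rtilde w) (Rtilde '' A) = Qfun γ q w A := by
  rintro ⟨u, v, s⟩ ⟨hE, hs⟩ A hA hAE
  have himg : Rtilde '' A = Rtilde ⁻¹' A := by
    ext x
    constructor
    · rintro ⟨y, hy, rfl⟩
      simpa [Set.mem_preimage, Rtilde_invol y] using hy
    · intro hx
      exact ⟨Rtilde x, hx, Rtilde_invol x⟩
  have hRA : MeasurableSet (Rtilde ⁻¹' A) := Rtilde_measurable hA
  rcases hs with rfl | rfl
  · -- s = 1
    have h1 : Rtilde (u, v, 1) = (v, u, -1) := by simp [Rtilde]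
    rw [h1, himg]
    simp only [Qfun]
    norm_num
    rw [Measure.map_apply ((ellMap_measurable γ u).prodMk measurable_const) hRA,
      Measure.map_apply (measurable_const.prodMk
        ((ellMap_measurable γ u).prodMk measurable_const)) hA]
    congr 1
    all_goals
      ext x
      simp [Rtilde]
  · -- s = -1
    have h1 : Rtilde (u, v, -1) = (v, u, 1) := by simp [Rtilde]
    rw [h1, himg]
    simp only [Qfun]
    norm_num
    rw [Measure.map_apply (measurable_const.prodMk
        ((ellMap_measurable γ v).prodMk measurable_const)) hRA,
      Measure.map_apply ((ellMap_measurable γ v).prodMk measurable_const) hA]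
    congr 1
    all_goals
      ext x
      simp [Rtilde]
end
end

section
/- Let p be a Markov kernel on a measurable space (S,𝒮) and let μ be a probability measure on (S,𝒮) invariant for p, with the property that every (μ,p)-ergodic set G ∈ 𝒮 satisfies μ(G) = 0. Then for every integer k ≥ 1 there exists a partition of S into 2^{2k} measurable (μ,p)-invariant sets F₁, …, F_{2^{2k}} with 0 < μ(F_i) ≤ 2^{−k} for each i. -/
open MeasureTheory ProbabilityTheory Set Pointwise
open scoped ENNReal

noncomputable section

/-!
Since no invariant set of positive measure is ergodic, `μ` restricted to the invariant σ-algebra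
is atomless. In an atomless finite measure space every set `A` contains a subset of measure
between `ν A / 3` and `2 ν A / 3`: otherwise the subsets of measure at most `ν A / 3` are closed
under finite and increasing unions, so one of them has maximal measure, yet it can still be
enlarged by a small piece of its complement. Splitting `2k` times yields `2^(2k)` sets of measure at most
`(2/3)^(2k) ≤ 2^(-k)`.
-/

open Function

section Atomless

variable {α : Type*} {m : MeasurableSpace α} {ν : Measure α}

/-- Atoms here are measurable sets, not points as in `NoAtoms`. -/
def IsAtomless (ν : Measure α) : Prop :=
  ∀ A, MeasurableSet A → 0 < ν A → ∃ B ⊆ A, MeasurableSet B ∧ 0 < ν B ∧ 0 < ν (A \ B)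

theorem exists_forall_measure_le_of_union_mem (ν : Measure α) {𝒞 : Set (Set α)}
    (hne : 𝒞.Nonempty) (hunion : ∀ s ∈ 𝒞, ∀ t ∈ 𝒞, s ∪ t ∈ 𝒞)
    (hmono : ∀ s : ℕ → Set α, Monotone s → (∀ n, s n ∈ 𝒞) → ⋃ n, s n ∈ 𝒞) :
    ∃ C ∈ 𝒞, ∀ B ∈ 𝒞, ν B ≤ ν C := by
  obtain ⟨u, -, hu, hu𝒞⟩ := exists_seq_tendsto_sSup (hne.image ν) (OrderTop.bddAbove _)
  choose B hB𝒞 hBu using hu𝒞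
  have hacc : ∀ n, accumulate B n ∈ 𝒞 := by
    intro n
    induction n with
    | zero => simpa only [accumulate_zero_nat] using hB𝒞 0
    | succ n ih => simpa only [accumulate_succ] using hunion _ ih _ (hB𝒞 _)
  refine ⟨⋃ n, accumulate B n, hmono _ monotone_accumulate hacc, fun A hA => ?_⟩
  refine (le_csSup (OrderTop.bddAbove _) (mem_image_of_mem ν hA)).trans
    (le_of_tendsto' hu fun n => ?_)
  rw [← hBu n]
  exact measure_mono (subset_accumulate.trans (subset_iUnion _ n))

theorem IsAtomless.exists_subset_two_mul_le (hν : IsAtomless ν) {A : Set α}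
    (hA : MeasurableSet A) (hpos : 0 < ν A) :
    ∃ B ⊆ A, MeasurableSet B ∧ 0 < ν B ∧ 2 * ν B ≤ ν A := by
  obtain ⟨B, hBA, hB, hBpos, hABpos⟩ := hν A hA hpos
  have hsum : ν B + ν (A \ B) = ν A := by
    rw [measure_add_sdiff hB.nullMeasurableSet, union_eq_self_of_subset_left hBA]
  rcases le_total (ν B) (ν (A \ B)) with h | h
  · exact ⟨B, hBA, hB, hBpos, by rw [two_mul, ← hsum]; gcongr⟩
  · exact ⟨A \ B, sdiff_subset, hA.diff hB, hABpos, by rw [two_mul, ← hsum]; gcongr⟩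

theorem IsAtomless.exists_subset_two_pow_mul_le (hν : IsAtomless ν) (n : ℕ) {A : Set α}
    (hA : MeasurableSet A) (hpos : 0 < ν A) :
    ∃ B ⊆ A, MeasurableSet B ∧ 0 < ν B ∧ 2 ^ n * ν B ≤ ν A := by
  induction n with
  | zero => exact ⟨A, subset_rfl, hA, hpos, by simp⟩
  | succ n ih =>
    obtain ⟨B, hBA, hB, hBpos, hBle⟩ := ih
    obtain ⟨C, hCB, hC, hCpos, hCle⟩ := hν.exists_subset_two_mul_le hB hBpos
    refine ⟨C, hCB.trans hBA, hC, hCpos, ?_⟩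
    calc 2 ^ (n + 1) * ν C = 2 ^ n * (2 * ν C) := by ring
      _ ≤ 2 ^ n * ν B := by gcongr
      _ ≤ ν A := hBle

theorem IsAtomless.exists_subset_measure_between [IsFiniteMeasure ν] (hν : IsAtomless ν)
    {A : Set α} (hA : MeasurableSet A) :
    ∃ B ⊆ A, MeasurableSet B ∧ ν A ≤ 3 * ν B ∧ 3 * ν B ≤ 2 * ν A := by
  by_contra! H
  have hsmall : ∀ B ⊆ A, MeasurableSet B → 3 * ν B ≤ 2 * ν A → 3 * ν B < ν A :=
    fun B hBA hB h => not_le.1 fun h' => (H B hBA hB h').not_ge h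
  let 𝒞 : Set (Set α) := {B | B ⊆ A ∧ MeasurableSet B ∧ 3 * ν B ≤ ν A}
  have h𝒞union : ∀ s ∈ 𝒞, ∀ t ∈ 𝒞, s ∪ t ∈ 𝒞 := by
    rintro s ⟨hsA, hs, hs3⟩ t ⟨htA, ht, ht3⟩
    have hst := union_subset hsA htA
    refine ⟨hst, hs.union ht, (hsmall _ hst (hs.union ht) ?_).le⟩
    calc 3 * ν (s ∪ t) ≤ 3 * ν s + 3 * ν t := by rw [← mul_add]; gcongr; exact measure_union_le s t
      _ ≤ 2 * ν A := by rw [two_mul]; gcongr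
  have h𝒞mono : ∀ s : ℕ → Set α, Monotone s → (∀ n, s n ∈ 𝒞) → ⋃ n, s n ∈ 𝒞 := by
    refine fun s hmono hs => ⟨iUnion_subset fun n => (hs n).1, .iUnion fun n => (hs n).2.1, ?_⟩
    rw [hmono.measure_iUnion, ENNReal.mul_iSup]
    exact iSup_le fun n => (hs n).2.2
  obtain ⟨C, ⟨hCA, hC, hC3⟩, hCmax⟩ :=
    exists_forall_measure_le_of_union_mem ν (𝒞 := 𝒞) ⟨∅, empty_subset A, .empty, by simp⟩ h𝒞union
      h𝒞mono
  have hCA' : ν C < ν A := (le_mul_of_one_le_left' (by norm_num)).trans_lt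
    (hsmall C hCA hC (hC3.trans (le_mul_of_one_le_left' one_le_two)))
  have hACpos : 0 < ν (A \ C) := by
    rw [measure_sdiff hCA hC.nullMeasurableSet (measure_ne_top ν C)]
    exact tsub_pos_of_lt hCA'
  obtain ⟨D, hDAC, hDm, hDpos, hD4⟩ := hν.exists_subset_two_pow_mul_le 2 (hA.diff hC) hACpos
  have hD3 : 3 * ν D ≤ ν A := calc
    3 * ν D ≤ 2 ^ 2 * ν D := by gcongr; norm_num
    _ ≤ ν (A \ C) := hD4
    _ ≤ ν A := measure_mono sdiff_subset
  have hCD := hCmax (C ∪ D) (h𝒞union C ⟨hCA, hC, hC3⟩ D ⟨hDAC.trans sdiff_subset, hDm, hD3⟩)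
  rw [measure_union (disjoint_sdiff_right.mono_right hDAC) hDm] at hCD
  exact (ENNReal.lt_add_right (measure_ne_top ν C) hDpos.ne').not_ge hCD

theorem IsAtomless.exists_bool_partition [IsFiniteMeasure ν] (hν : IsAtomless ν)
    {A : Set α} (hA : MeasurableSet A) (hpos : 0 < ν A) :
    ∃ P : Bool → Set α, (∀ b, MeasurableSet (P b)) ∧ Pairwise (Disjoint on P) ∧
      ⋃ b, P b = A ∧ ∀ b, 0 < ν (P b) ∧ 3 * ν (P b) ≤ 2 * ν A := by
  obtain ⟨B, hBA, hB, hB₁, hB₂⟩ := hν.exists_subset_measure_between hA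
  have hAB : ν (A \ B) = ν A - ν B := measure_sdiff hBA hB.nullMeasurableSet (measure_ne_top ν B)
  have hBlt : ν B < ν A := lt_of_not_ge fun h => by
    have h32 := (ENNReal.mul_le_mul_iff_left hpos.ne' (measure_ne_top ν A)).1
      ((mul_le_mul_right h 3).trans hB₂)
    norm_num at h32
  refine ⟨fun b => cond b B (A \ B), Bool.forall_bool.2 ⟨hA.diff hB, hB⟩,
    pairwise_disjoint_on_bool.2 disjoint_sdiff_right,
    by rw [← union_eq_iUnion, union_sdiff_cancel hBA],
    Bool.forall_bool.2 ⟨⟨?_, ?_⟩, ?_, hB₂⟩⟩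
  · show 0 < ν (A \ B)
    rw [hAB]; exact tsub_pos_of_lt hBlt
  · show 3 * ν (A \ B) ≤ 2 * ν A
    calc 3 * ν (A \ B) = 3 * ν A - 3 * ν B := by
          rw [hAB, ENNReal.mul_sub fun _ _ => by norm_num]
      _ ≤ 2 * ν A := tsub_le_iff_right.2 <| by
          calc 3 * ν A = 2 * ν A + ν A := by ring
            _ ≤ 2 * ν A + 3 * ν B := by gcongr
  · show 0 < ν B
    exact pos_iff_ne_zero.2 fun h => hpos.ne' (by simpa [h] using hB₁)

theorem IsAtomless.exists_partition_pow [IsFiniteMeasure ν] (hν : IsAtomless ν) (n : ℕ)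
    {A : Set α} (hA : MeasurableSet A) (hpos : 0 < ν A) :
    ∃ G : (Fin n → Bool) → Set α, (∀ g, MeasurableSet (G g)) ∧ Pairwise (Disjoint on G) ∧
      ⋃ g, G g = A ∧ ∀ g, 0 < ν (G g) ∧ 3 ^ n * ν (G g) ≤ 2 ^ n * ν A := by
  induction n generalizing A with
  | zero => exact ⟨fun _ => A, fun _ => hA, Subsingleton.pairwise, iUnion_const A, by simpa⟩
  | succ n ih =>
    obtain ⟨P, hPm, hPd, hPu, hPb⟩ := hν.exists_bool_partition hA hpos
    choose G hGm hGd hGu hGb using fun i => ih (hPm i) (hPb i).1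
    have hGP : ∀ i g, G i g ⊆ P i := fun i g => (hGu i).le.trans' (subset_iUnion _ g)
    refine ⟨fun h => G (h 0) (Fin.tail h), fun h => hGm _ _, fun h h' hne => ?_, ?_, fun h => ?_⟩
    · by_cases h0 : h 0 = h' 0
      · have ht : Fin.tail h ≠ Fin.tail h' := fun ht =>
          hne (by rw [← Fin.cons_self_tail h, ← Fin.cons_self_tail h', h0, ht])
        simpa only [Function.onFun, h0] using hGd (h' 0) ht
      · exact (hPd h0).mono (hGP _ _) (hGP _ _)
    · rw [← hPu, ← (Fin.consEquiv fun _ => Bool).surjective.iUnion_comp, iUnion_prod']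
      simp only [Fin.consEquiv, Equiv.coe_fn_mk, Fin.cons_zero, Fin.tail_cons, hGu]
    · refine ⟨(hGb _ _).1, ?_⟩
      calc 3 ^ (n + 1) * ν (G (h 0) (Fin.tail h))
          = 3 * (3 ^ n * ν (G (h 0) (Fin.tail h))) := by ring
        _ ≤ 3 * (2 ^ n * ν (P (h 0))) := by gcongr 3 * ?_; exact (hGb _ _).2
        _ = 2 ^ n * (3 * ν (P (h 0))) := by ring
        _ ≤ 2 ^ n * (2 * ν A) := by gcongr 2 ^ n * ?_; exact (hPb _).2
        _ = 2 ^ (n + 1) * ν A := by ring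

end Atomless

section InvariantSets

variable {S : Type*} [MeasurableSpace S] {p : Kernel S S} {μ : Measure S}

theorem kInvariantSet_empty : KInvariantSet μ (fun x => p x) ∅ :=
  .of_forall fun _ hx => absurd hx (notMem_empty _)

theorem kInvariantSet_iUnion [IsMarkovKernel p] {B : ℕ → Set S}
    (hB : ∀ n, KInvariantSet μ (fun x => p x) (B n)) :
    KInvariantSet μ (fun x => p x) (⋃ n, B n) := by
  filter_upwards [ae_all_iff.2 hB] with x hx hxB
  obtain ⟨n, hn⟩ := mem_iUnion.1 hxB
  exact le_antisymm prob_le_one ((hx n hn).symm.trans_le (measure_mono (subset_iUnion B n)))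

theorem KInvariantSet.compl [IsMarkovKernel p] [IsFiniteMeasure μ]
    (hinv : KInvariantMeasure μ (fun x => p x)) {B : Set S} (hBm : MeasurableSet B)
    (hB : KInvariantSet μ (fun x => p x) B) :
    KInvariantSet μ (fun x => p x) Bᶜ := by
  have hin : ∫⁻ x in B, p x B ∂μ = μ B := by
    rw [setLIntegral_congr_fun_ae hBm (hB.mono fun x hx hxB => hx hxB), setLIntegral_const,
      one_mul]
  have hout : ∫⁻ x in Bᶜ, p x B ∂μ = 0 := by
    have htot := lintegral_add_compl (μ := μ) (fun x => p x B) hBm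
    rw [hinv B hBm, hin] at htot
    exact (ENNReal.add_right_inj (measure_ne_top μ B)).1 (htot.trans (add_zero _).symm)
  filter_upwards [(ae_restrict_iff' hBm.compl).1
    ((lintegral_eq_zero_iff (p.measurable_coe hBm)).1 hout)] with x hx hxc
  rw [prob_compl_eq_one_sub hBm, hx hxc, Pi.zero_apply, tsub_zero]

abbrev invariantMeasurableSpace [IsMarkovKernel p] [IsFiniteMeasure μ]
    (hinv : KInvariantMeasure μ (fun x => p x)) : MeasurableSpace S where
  MeasurableSet' A := MeasurableSet A ∧ KInvariantSet μ (fun x => p x) A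
  measurableSet_empty := ⟨.empty, kInvariantSet_empty⟩
  measurableSet_compl _ h := ⟨h.1.compl, h.2.compl hinv h.1⟩
  measurableSet_iUnion _ h := ⟨.iUnion fun n => (h n).1, kInvariantSet_iUnion fun n => (h n).2⟩

theorem invariantMeasurableSpace_le [IsMarkovKernel p] [IsFiniteMeasure μ]
    (hinv : KInvariantMeasure μ (fun x => p x)) :
    invariantMeasurableSpace hinv ≤ ‹MeasurableSpace S› :=
  fun _ h => h.1

theorem isAtomless_trim_invariantMeasurableSpace [IsMarkovKernel p] [IsFiniteMeasure μ]
    (hinv : KInvariantMeasure μ (fun x => p x))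
    (herg : ∀ G : Set S, KErgodicSet μ (fun x => p x) G → μ G = 0) :
    IsAtomless (μ.trim (invariantMeasurableSpace_le hinv)) := by
  intro A hA hApos
  rw [trim_measurableSet_eq _ hA] at hApos
  have hnerg : ¬ KErgodicSet μ (fun x => p x) A := fun h => hApos.ne' (herg A h)
  simp only [KErgodicSet, hA.1, hA.2, true_and, not_forall, not_or] at hnerg
  obtain ⟨B, hBA, hBm, hBi, hB0, hBA'⟩ := hnerg
  have hB : MeasurableSet[invariantMeasurableSpace hinv] B := ⟨hBm, hBi⟩
  refine ⟨B, hBA, hB, ?_, ?_⟩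
  · rw [trim_measurableSet_eq _ hB]; exact pos_iff_ne_zero.2 hB0
  · rw [trim_measurableSet_eq _ (hA.diff hB), measure_sdiff hBA hBm.nullMeasurableSet
      (measure_ne_top μ B)]
    exact tsub_pos_of_lt ((measure_mono hBA).lt_of_ne hBA')

end InvariantSets

theorem ENNReal.le_inv_two_pow_of_three_pow_mul_le {x : ℝ≥0∞} {k : ℕ}
    (h : 3 ^ (2 * k) * x ≤ 2 ^ (2 * k)) : x ≤ 2⁻¹ ^ k := by
  rw [pow_mul, pow_mul] at h
  norm_num at h
  rw [← ENNReal.inv_pow, ENNReal.le_inv_iff_mul_le, mul_comm]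
  refine (ENNReal.mul_le_mul_iff_right (a := 4 ^ k) (by positivity) (by simp)).1 ?_
  calc 4 ^ k * (2 ^ k * x) = 8 ^ k * x := by rw [← mul_assoc, ← mul_pow]; norm_num
    _ ≤ 9 ^ k * x := by gcongr; norm_num
    _ ≤ 4 ^ k * 1 := by rwa [mul_one]

theorem partition_into_small_invariant_sets_general
    {S : Type*} [MeasurableSpace S] (p : Kernel S S) (hp : IsMarkovKernel p)
    (μ : Measure S) (hμ : IsProbabilityMeasure μ)
    (hinv : KInvariantMeasure μ (fun x => p x))
    (herg : ∀ G : Set S, KErgodicSet μ (fun x => p x) G → μ G = 0)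
    (k : ℕ) :
    ∃ F : Fin (2 ^ (2 * k)) → Set S,
      (∀ i, MeasurableSet (F i)) ∧
      (∀ i, KInvariantSet μ (fun x => p x) (F i)) ∧
      Pairwise (Function.onFun Disjoint F) ∧
      (⋃ i, F i) = univ ∧
      ∀ i, 0 < μ (F i) ∧ μ (F i) ≤ (2 : ℝ≥0∞)⁻¹ ^ k := by
  have hle := invariantMeasurableSpace_le hinv
  obtain ⟨G, hGm, hGd, hGu, hGb⟩ :=
    (isAtomless_trim_invariantMeasurableSpace hinv herg).exists_partition_pow (2 * k)
      MeasurableSet.univ (by simp [trim_measurableSet_eq hle MeasurableSet.univ])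
  have hGμ : ∀ g, μ.trim hle (G g) = μ (G g) := fun g => trim_measurableSet_eq hle (hGm g)
  let e : Fin (2 ^ (2 * k)) ≃ (Fin (2 * k) → Bool) := (Fintype.equivFinOfCardEq (by simp)).symm
  refine ⟨fun i => G (e i), fun i => (hGm _).1, fun i => (hGm _).2,
    hGd.comp_of_injective e.injective, by rw [e.surjective.iUnion_comp G, hGu], fun i => ?_⟩
  obtain ⟨hpos, hbound⟩ := hGb (e i)
  rw [hGμ] at hpos hbound
  rw [trim_measurableSet_eq _ .univ, measure_univ, mul_one] at hbound
  exact ⟨hpos, ENNReal.le_inv_two_pow_of_three_pow_mul_le hbound⟩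

/-- if `μ` is an invariant probability measure for a Markov kernel `p` and
every `(μ,p)`-ergodic set is `μ`-null, then for every `k ≥ 1` the space can be partitioned
into `2^(2k)` invariant sets, each of positive measure at most `2^(-k)`. -/
theorem partition_into_small_invariant_sets
    {S : Type*} [MeasurableSpace S] (p : Kernel S S) (hp : IsMarkovKernel p)
    (μ : Measure S) (hμ : IsProbabilityMeasure μ)
    (hinv : KInvariantMeasure μ (fun x => p x))
    (herg : ∀ G : Set S, KErgodicSet μ (fun x => p x) G → μ G = 0)
    (k : ℕ) (hk : 1 ≤ k) :
    ∃ F : Fin (2 ^ (2 * k)) → Set S,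
      (∀ i, MeasurableSet (F i)) ∧
      (∀ i, KInvariantSet μ (fun x => p x) (F i)) ∧
      Pairwise (Function.onFun Disjoint F) ∧
      (⋃ i, F i) = univ ∧
      ∀ i, 0 < μ (F i) ∧ μ (F i) ≤ (2 : ℝ≥0∞)⁻¹ ^ k :=
  partition_into_small_invariant_sets_general p hp μ hμ hinv herg k
end
end
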